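/- Let A be a Hopf algebra and σ a normalized Hopf 2-cocycle on A with convolution inverse σ^{-1}. Then σ^{-1} is a normalized Hopf 2-cocycle on A_σ, and (A_σ)_{σ^{-1}} = A. Consequently the arrows α_σ: A → A_σ between Hopf algebras, with composition α_τ ∘ α_σ = α_{τ∗σ}, identity α_ε, and inverse α_{σ^{-1}}, form a groupoid. -/

import Mathlib

open TensorProduct

section ConvolutionFramework

variable (A : Type*) [Ring A] [Algebra ℂ A]

/-- The comultiplication of the tensor-product coalgebra `A ⊗ A`, built from a given
comultiplication `Δ` on `A`. -/
noncomputable def comul₂ (Δ : A →ₗ[ℂ] A ⊗[ℂ] A) :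
    (A ⊗[ℂ] A) →ₗ[ℂ] (A ⊗[ℂ] A) ⊗[ℂ] (A ⊗[ℂ] A) :=
  (TensorProduct.tensorTensorTensorComm ℂ A A A A).toLinearMap ∘ₗ TensorProduct.map Δ Δ

/-- The counit of the tensor-product coalgebra `A ⊗ A`. -/
noncomputable def counit₂ (ε : A →ₗ[ℂ] ℂ) : (A ⊗[ℂ] A) →ₗ[ℂ] ℂ :=
  (LinearMap.mul' ℂ ℂ) ∘ₗ TensorProduct.map ε ε

/-- Convolution product of two ℂ-valued linear maps on the coalgebra `A ⊗ A`:
`(σ ∗ τ)(a,b) = σ(a₁,b₁) τ(a₂,b₂)`. -/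
noncomputable def convC (Δ : A →ₗ[ℂ] A ⊗[ℂ] A) (σ τ : (A ⊗[ℂ] A) →ₗ[ℂ] ℂ) :
    (A ⊗[ℂ] A) →ₗ[ℂ] ℂ :=
  (LinearMap.mul' ℂ ℂ) ∘ₗ TensorProduct.map σ τ ∘ₗ comul₂ A Δ

/-- Convolution product of two `A`-valued linear maps on the coalgebra `A ⊗ A`. -/
noncomputable def convH (Δ : A →ₗ[ℂ] A ⊗[ℂ] A) (f g : (A ⊗[ℂ] A) →ₗ[ℂ] A) :
    (A ⊗[ℂ] A) →ₗ[ℂ] A :=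
  (LinearMap.mul' ℂ A) ∘ₗ TensorProduct.map f g ∘ₗ comul₂ A Δ

/-- View a ℂ-valued map as an `A`-valued map via the unit of `A`. -/
noncomputable def toA (σ : (A ⊗[ℂ] A) →ₗ[ℂ] ℂ) : (A ⊗[ℂ] A) →ₗ[ℂ] A :=
  (Algebra.linearMap ℂ A) ∘ₗ σ

/-- The cocycle-deformed multiplication `m_σ = σ ∗ m ∗ σ⁻¹`. -/
noncomputable def deformMul (Δ : A →ₗ[ℂ] A ⊗[ℂ] A) (m : (A ⊗[ℂ] A) →ₗ[ℂ] A)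
    (σ σinv : (A ⊗[ℂ] A) →ₗ[ℂ] ℂ) : (A ⊗[ℂ] A) →ₗ[ℂ] A :=
  convH A Δ (convH A Δ (toA A σ) m) (toA A σinv)

/-- The linear map `a ⊗ (b ⊗ c) ↦ σ(b₁,c₁) σ(a, b₂·c₂)` (left side of the cocycle
condition), for the multiplication `m`. -/
noncomputable def cocyLHS (Δ : A →ₗ[ℂ] A ⊗[ℂ] A) (m : (A ⊗[ℂ] A) →ₗ[ℂ] A)
    (σ : (A ⊗[ℂ] A) →ₗ[ℂ] ℂ) : (A ⊗[ℂ] (A ⊗[ℂ] A)) →ₗ[ℂ] ℂ :=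
  (LinearMap.mul' ℂ ℂ) ∘ₗ TensorProduct.map σ σ ∘ₗ
    (TensorProduct.leftComm ℂ A (A ⊗[ℂ] A) A).toLinearMap ∘ₗ
      LinearMap.lTensor A ((LinearMap.lTensor (A ⊗[ℂ] A) m) ∘ₗ comul₂ A Δ)

/-- The linear map `a ⊗ (b ⊗ c) ↦ σ(a₁,b₁) σ(a₂·b₂, c)` (right side of the cocycle
condition), for the multiplication `m`. -/
noncomputable def cocyRHS (Δ : A →ₗ[ℂ] A ⊗[ℂ] A) (m : (A ⊗[ℂ] A) →ₗ[ℂ] A)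
    (σ : (A ⊗[ℂ] A) →ₗ[ℂ] ℂ) : (A ⊗[ℂ] (A ⊗[ℂ] A)) →ₗ[ℂ] ℂ :=
  (LinearMap.mul' ℂ ℂ) ∘ₗ TensorProduct.map σ σ ∘ₗ
    (TensorProduct.assoc ℂ (A ⊗[ℂ] A) A A).toLinearMap ∘ₗ
      LinearMap.rTensor A ((LinearMap.lTensor (A ⊗[ℂ] A) m) ∘ₗ comul₂ A Δ) ∘ₗ
        (TensorProduct.assoc ℂ A A A).symm.toLinearMap

/-- `σ` satisfies the Hopf 2-cocycle condition
`σ(b₁,c₁) σ(a, b₂c₂) = σ(a₁,b₁) σ(a₂b₂, c)` with respect to the multiplication `m`. -/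
def IsHopf2Cocycle (Δ : A →ₗ[ℂ] A ⊗[ℂ] A) (m : (A ⊗[ℂ] A) →ₗ[ℂ] A)
    (σ : (A ⊗[ℂ] A) →ₗ[ℂ] ℂ) : Prop :=
  cocyLHS A Δ m σ = cocyRHS A Δ m σ

/-- `σ` is normalized: `σ(a,1) = ε(a) = σ(1,a)`. -/
def IsNormalizedCocycle (ε : A →ₗ[ℂ] ℂ) (σ : (A ⊗[ℂ] A) →ₗ[ℂ] ℂ) : Prop :=
  ∀ a : A, σ (a ⊗ₜ[ℂ] (1 : A)) = ε a ∧ σ ((1 : A) ⊗ₜ[ℂ] a) = ε a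

/-- `σinv` is a convolution inverse of `σ` on the coalgebra `A ⊗ A`. -/
def IsConvInverse (Δ : A →ₗ[ℂ] A ⊗[ℂ] A) (ε : A →ₗ[ℂ] ℂ)
    (σ σinv : (A ⊗[ℂ] A) →ₗ[ℂ] ℂ) : Prop :=
  convC A Δ σ σinv = counit₂ A ε ∧ convC A Δ σinv σ = counit₂ A ε

end ConvolutionFramework

/-!
Work in the convolution monoid of linear maps `A ⊗ A ⊗ A → ℂ`. Pulling `σ` back along the
coalgebra maps `ε ⊗ id`, `id ⊗ m`, `id ⊗ ε` and `m ⊗ id` gives four convolution-invertible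
elements `P, Q, S, T`, and the cocycle condition for `σ` reads `P ∗ Q = S ∗ T`. Since
`σ⁻¹ ∗ m_σ = m ∗ σ⁻¹`, the cocycle condition for `σ⁻¹` on `A_σ` reads `Q⁻¹ ∗ P⁻¹ = T⁻¹ ∗ S⁻¹`,
which is the inverse of the former. Pulling back along `a ↦ a ⊗ 1` and `a ↦ 1 ⊗ a` is also
multiplicative, so `σ⁻¹` is normalized with `σ`; and `(A_σ)_{σ⁻¹} = A`, `A_ε = A` are
associativity and unitality of convolution in `Hom(A ⊗ A, A)`.
-/

open Coalgebra WithConv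

section ConvolutionFunctoriality

variable {R A B C D : Type*} [CommSemiring R] [Semiring A] [Algebra R A] [Semiring B] [Algebra R B]
  [AddCommMonoid C] [Module R C] [Coalgebra R C] [AddCommMonoid D] [Module R D] [Coalgebra R D]

noncomputable def AlgHom.postcompConv (h : A →ₐ[R] B) :
    WithConv (C →ₗ[R] A) →* WithConv (C →ₗ[R] B) where
  toFun f := toConv (h.toLinearMap ∘ₗ f.ofConv)
  map_one' := by ext; simp
  map_mul' f g := WithConv.ext (LinearMap.algHom_comp_convMul_distrib h f g)

lemma Coalgebra.toConv_counit : toConv (counit : C →ₗ[R] R) = 1 := by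
  ext; simp

@[simp] lemma AlgHom.ofConv_postcompConv (h : A →ₐ[R] B) (f : WithConv (C →ₗ[R] A)) :
    (h.postcompConv f).ofConv = h.toLinearMap ∘ₗ f.ofConv := rfl

noncomputable def CoalgHom.precompConv (φ : D →ₗc[R] C) :
    WithConv (C →ₗ[R] A) →* WithConv (D →ₗ[R] A) where
  toFun f := toConv (f.ofConv ∘ₗ φ.toLinearMap)
  map_one' := by ext; simp
  map_mul' f g := WithConv.ext (LinearMap.convMul_comp_coalgHom_distrib f g φ)

@[simp] lemma CoalgHom.ofConv_precompConv (φ : D →ₗc[R] C) (f : WithConv (C →ₗ[R] A)) :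
    (φ.precompConv f).ofConv = f.ofConv ∘ₗ φ.toLinearMap := rfl

end ConvolutionFunctoriality

section CounitLegs

variable (R C D : Type*) [CommSemiring R] [AddCommMonoid C] [Module R C] [Coalgebra R C]
  [AddCommMonoid D] [Module R D] [Coalgebra R D]

noncomputable def Coalgebra.counitLeft : C ⊗[R] D →ₗc[R] D :=
  (Coalgebra.TensorProduct.lid R D).toCoalgHom.comp
    (Coalgebra.TensorProduct.map (counitCoalgHom R C) (CoalgHom.id R D))

noncomputable def Coalgebra.counitRight : C ⊗[R] D →ₗc[R] C :=
  (Coalgebra.TensorProduct.rid R R C).toCoalgHom.comp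
    (Coalgebra.TensorProduct.map (CoalgHom.id R C) (counitCoalgHom R D))

variable {R C D}

@[simp] lemma Coalgebra.counitLeft_tmul (c : C) (d : D) :
    counitLeft R C D (c ⊗ₜ d) = counit (R := R) c • d := rfl

@[simp] lemma Coalgebra.counitRight_tmul (c : C) (d : D) :
    counitRight R C D (c ⊗ₜ d) = counit (R := R) d • c := rfl

lemma Coalgebra.sum_counit_right_smul {c : C} {ι : Type*} (𝓡 : Repr R c ι) :
    ∑ i ∈ 𝓡.index, counit (R := R) (𝓡.right i) • 𝓡.left i = c := by
  simpa only [map_sum, _root_.TensorProduct.rid_tmul, one_smul]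
    using congrArg (_root_.TensorProduct.rid R C) (sum_tmul_counit_eq 𝓡)

end CounitLegs

section Absorption

variable {R B C D : Type*} [CommSemiring R] [Semiring B] [Algebra R B]
  [AddCommMonoid C] [Module R C] [Coalgebra R C] [AddCommMonoid D] [Module R D] [Coalgebra R D]

/- Scalar factors escape from the second slot of `τ`:
`τ(c, ρ(d₁) g(d₂)) = ε(c₁) ρ(d₁) τ(c₂, g(d₂))`, and likewise on the right and for `rTensor`. -/
lemma comp_lTensor_postcompConv_mul (τ : C ⊗[R] B →ₗ[R] R) (ρ : WithConv (D →ₗ[R] R))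
    (g : WithConv (D →ₗ[R] B)) :
    toConv (τ ∘ₗ ((Algebra.ofId R B).postcompConv ρ * g).ofConv.lTensor C)
      = (counitLeft R C D).precompConv ρ * toConv (τ ∘ₗ g.ofConv.lTensor C) := by
  ext1; refine TensorProduct.ext' fun c d => ?_
  conv_lhs => rw [← sum_counit_smul (ℛ R c)]
  simp [← (ℛ R c).eq, ← (ℛ R d).eq, tmul_sum, sum_tmul, ← Algebra.smul_def, ← smul_tmul',
    Finset.mul_sum, Finset.sum_comm (s := (ℛ R c).index), mul_assoc]

lemma comp_lTensor_mul_postcompConv (τ : C ⊗[R] B →ₗ[R] R) (ρ : WithConv (D →ₗ[R] R))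
    (g : WithConv (D →ₗ[R] B)) :
    toConv (τ ∘ₗ (g * (Algebra.ofId R B).postcompConv ρ).ofConv.lTensor C)
      = toConv (τ ∘ₗ g.ofConv.lTensor C) * (counitLeft R C D).precompConv ρ := by
  ext1; refine TensorProduct.ext' fun c d => ?_
  conv_lhs => rw [← sum_counit_right_smul (ℛ R c)]
  simp [← (ℛ R c).eq, ← (ℛ R d).eq, tmul_sum, sum_tmul, ← Algebra.commutes, ← Algebra.smul_def,
    ← smul_tmul', Finset.mul_sum, Finset.sum_comm (s := (ℛ R c).index), mul_assoc, mul_comm]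

lemma comp_rTensor_postcompConv_mul (τ : B ⊗[R] C →ₗ[R] R) (ρ : WithConv (D →ₗ[R] R))
    (g : WithConv (D →ₗ[R] B)) :
    toConv (τ ∘ₗ ((Algebra.ofId R B).postcompConv ρ * g).ofConv.rTensor C)
      = (counitRight R D C).precompConv ρ * toConv (τ ∘ₗ g.ofConv.rTensor C) := by
  ext1; refine TensorProduct.ext' fun d c => ?_
  conv_lhs => rw [← sum_counit_smul (ℛ R c)]
  simp [← (ℛ R c).eq, ← (ℛ R d).eq, tmul_sum, sum_tmul, ← Algebra.smul_def, ← smul_tmul',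
    tmul_smul, Finset.mul_sum, mul_assoc]

lemma comp_rTensor_mul_postcompConv (τ : B ⊗[R] C →ₗ[R] R) (ρ : WithConv (D →ₗ[R] R))
    (g : WithConv (D →ₗ[R] B)) :
    toConv (τ ∘ₗ (g * (Algebra.ofId R B).postcompConv ρ).ofConv.rTensor C)
      = toConv (τ ∘ₗ g.ofConv.rTensor C) * (counitRight R D C).precompConv ρ := by
  ext1; refine TensorProduct.ext' fun d c => ?_
  conv_lhs => rw [← sum_counit_right_smul (ℛ R c)]
  simp [← (ℛ R c).eq, ← (ℛ R d).eq, tmul_sum, sum_tmul, ← Algebra.commutes, ← Algebra.smul_def,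
    ← smul_tmul', tmul_smul, Finset.mul_sum, mul_assoc, mul_comm]

end Absorption

section Deformation

variable {A : Type*} [Ring A] [Algebra ℂ A] [Coalgebra ℂ A]

local notation "Ψ" => AlgHom.postcompConv (C := A ⊗[ℂ] A) (Algebra.ofId ℂ A)
local notation "α" =>
  CoalgEquiv.toCoalgHom (CoalgEquiv.symm (Coalgebra.TensorProduct.assoc ℂ ℂ A A A))

lemma counit₂_counit : counit₂ A counit = counit := by
  ext a b; simp [counit₂, mul_comm]

lemma convC_eq_counit_iff (f g : A ⊗[ℂ] A →ₗ[ℂ] ℂ) :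
    convC A comul f g = counit ↔ toConv f * toConv g = 1 := by
  rw [← toConv_counit]
  exact toConv_injective.eq_iff.symm

lemma isConvInverse_iff {σ σinv : A ⊗[ℂ] A →ₗ[ℂ] ℂ} :
    IsConvInverse A comul counit σ σinv ↔
      toConv σ * toConv σinv = 1 ∧ toConv σinv * toConv σ = 1 := by
  rw [IsConvInverse, counit₂_counit, convC_eq_counit_iff, convC_eq_counit_iff]

lemma deformMul_eq (m : A ⊗[ℂ] A →ₗ[ℂ] A) (σ σinv : A ⊗[ℂ] A →ₗ[ℂ] ℂ) :
    deformMul A comul m σ σinv = (Ψ (toConv σ) * toConv m * Ψ (toConv σinv)).ofConv := rfl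

lemma comul₂_comul : comul₂ A comul = (comul : A ⊗[ℂ] A →ₗ[ℂ] _) := rfl

/- `σ(b₁, c₁) σ(a, b₂c₂) = σ(a, σ(b₁, c₁) b₂c₂)`: each side of the cocycle condition is `τ`
evaluated on the `τ`-twisted product `τ ∗ m`. -/
lemma cocyLHS_eq (m : A ⊗[ℂ] A →ₗ[ℂ] A) (τ : A ⊗[ℂ] A →ₗ[ℂ] ℂ) :
    cocyLHS A comul m τ = τ ∘ₗ (Ψ (toConv τ) * toConv m).ofConv.lTensor A := by
  refine TensorProduct.ext' fun a y => ?_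
  simp [cocyLHS, comul₂_comul, ← (ℛ ℂ y).eq, tmul_sum, ← Algebra.smul_def]

lemma cocyRHS_eq (m : A ⊗[ℂ] A →ₗ[ℂ] A) (τ : A ⊗[ℂ] A →ₗ[ℂ] ℂ) :
    cocyRHS A comul m τ = τ ∘ₗ (Ψ (toConv τ) * toConv m).ofConv.rTensor A ∘ₗ
      (TensorProduct.assoc ℂ A A A).symm := by
  ext a b c
  simp [cocyRHS, comul₂_comul, ← (ℛ ℂ (a ⊗ₜ[ℂ] b)).eq, sum_tmul, ← Algebra.smul_def,
    ← smul_tmul', -TensorProduct.comul_tmul]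

lemma isHopf2Cocycle_iff {m : A ⊗[ℂ] A →ₗ[ℂ] A} {τ : A ⊗[ℂ] A →ₗ[ℂ] ℂ} :
    IsHopf2Cocycle A comul m τ ↔
      toConv (τ ∘ₗ (Ψ (toConv τ) * toConv m).ofConv.lTensor A)
        = CoalgHom.precompConv α (toConv (τ ∘ₗ (Ψ (toConv τ) * toConv m).ofConv.rTensor A)) := by
  rw [IsHopf2Cocycle, cocyLHS_eq, cocyRHS_eq, ← toConv_injective.eq_iff]
  rfl

/- The convolution form `(ε ⊗ σ) ∗ σ(id ⊗ m) = (σ ⊗ ε) ∗ σ(m ⊗ id)` of the cocycle condition. -/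
lemma isHopf2Cocycle_iff_convMul {m : A ⊗[ℂ] A →ₗc[ℂ] A} {σ : A ⊗[ℂ] A →ₗ[ℂ] ℂ} :
    IsHopf2Cocycle A comul m σ ↔
      (counitLeft ℂ A (A ⊗[ℂ] A)).precompConv (toConv σ)
          * (CoalgHom.lTensor A m).precompConv (toConv σ)
        = ((counitRight ℂ (A ⊗[ℂ] A) A).comp α).precompConv (toConv σ)
          * ((CoalgHom.rTensor A m).comp α).precompConv (toConv σ) := by
  rw [isHopf2Cocycle_iff, comp_lTensor_postcompConv_mul, comp_rTensor_postcompConv_mul, map_mul]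
  rfl

lemma isHopf2Cocycle_deformMul_iff {m : A ⊗[ℂ] A →ₗc[ℂ] A} {σ σinv : A ⊗[ℂ] A →ₗ[ℂ] ℂ}
    (hσi : IsConvInverse A comul counit σ σinv) :
    IsHopf2Cocycle A comul (deformMul A comul m σ σinv) σinv ↔
      (CoalgHom.lTensor A m).precompConv (toConv σinv)
          * (counitLeft ℂ A (A ⊗[ℂ] A)).precompConv (toConv σinv)
        = ((CoalgHom.rTensor A m).comp α).precompConv (toConv σinv)
          * ((counitRight ℂ (A ⊗[ℂ] A) A).comp α).precompConv (toConv σinv) := by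
  have hinv : Ψ (toConv σinv) * toConv (deformMul A comul m σ σinv)
      = toConv (m : A ⊗[ℂ] A →ₗ[ℂ] A) * Ψ (toConv σinv) := by
    rw [deformMul_eq, toConv_ofConv, ← mul_assoc, ← mul_assoc, ← map_mul,
      (isConvInverse_iff.1 hσi).2, map_one, one_mul]
  rw [isHopf2Cocycle_iff, hinv, comp_lTensor_mul_postcompConv, comp_rTensor_mul_postcompConv,
    map_mul]
  rfl

theorem IsHopf2Cocycle.deformMul_inv {m : A ⊗[ℂ] A →ₗc[ℂ] A} {σ σinv : A ⊗[ℂ] A →ₗ[ℂ] ℂ}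
    (hσ : IsHopf2Cocycle A comul m σ) (hσi : IsConvInverse A comul counit σ σinv) :
    IsHopf2Cocycle A comul (deformMul A comul m σ σinv) σinv := by
  obtain ⟨h₁, h₂⟩ := isConvInverse_iff.1 hσi
  let u : (WithConv (A ⊗[ℂ] A →ₗ[ℂ] ℂ))ˣ := ⟨toConv σ, toConv σinv, h₁, h₂⟩
  rw [isHopf2Cocycle_iff_convMul] at hσ
  rw [isHopf2Cocycle_deformMul_iff hσi]
  have hu : Units.map (counitLeft ℂ A (A ⊗[ℂ] A)).precompConv u
        * Units.map (CoalgHom.lTensor A m).precompConv u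
      = Units.map ((counitRight ℂ (A ⊗[ℂ] A) A).comp α).precompConv u
        * Units.map ((CoalgHom.rTensor A m).comp α).precompConv u :=
    Units.ext hσ
  have hu_inv := congrArg Units.val (congrArg Inv.inv hu)
  simp only [mul_inv_rev, Units.val_mul, Units.coe_map_inv] at hu_inv
  exact hu_inv

theorem deformMul_deformMul_inv (m : A ⊗[ℂ] A →ₗ[ℂ] A) {σ σinv : A ⊗[ℂ] A →ₗ[ℂ] ℂ}
    (hσi : IsConvInverse A comul counit σ σinv) :
    deformMul A comul (deformMul A comul m σ σinv) σinv σ = m := by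
  rw [deformMul_eq, deformMul_eq, toConv_ofConv]
  calc (Ψ (toConv σinv) * (Ψ (toConv σ) * toConv m * Ψ (toConv σinv)) * Ψ (toConv σ)).ofConv
      = (Ψ (toConv σinv * toConv σ) * toConv m * Ψ (toConv σinv * toConv σ)).ofConv := by
        simp only [map_mul, mul_assoc]
    _ = m := by rw [(isConvInverse_iff.1 hσi).2, map_one, one_mul, mul_one]

theorem deformMul_counit₂ (m : A ⊗[ℂ] A →ₗ[ℂ] A) :
    deformMul A comul m (counit₂ A counit) (counit₂ A counit) = m := by
  rw [deformMul_eq, counit₂_counit, toConv_counit, map_one, one_mul, mul_one]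

end Deformation

section UnitInclusions

variable (R A : Type*) [CommSemiring R] [Semiring A] [Bialgebra R A]

noncomputable def Bialgebra.includeLeftCoalgHom : A →ₗc[R] A ⊗[R] A :=
  (Coalgebra.TensorProduct.map (CoalgHom.id R A) (Bialgebra.unitBialgHom R A).toCoalgHom).comp
    (Coalgebra.TensorProduct.rid R R A).symm.toCoalgHom

noncomputable def Bialgebra.includeRightCoalgHom : A →ₗc[R] A ⊗[R] A :=
  (Coalgebra.TensorProduct.map (Bialgebra.unitBialgHom R A).toCoalgHom (CoalgHom.id R A)).comp
    (Coalgebra.TensorProduct.lid R A).symm.toCoalgHom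

variable {R A}

@[simp] lemma Bialgebra.includeLeftCoalgHom_apply (a : A) :
    includeLeftCoalgHom R A a = a ⊗ₜ 1 := by
  simp [includeLeftCoalgHom, BialgHom.toCoalgHom_apply]

@[simp] lemma Bialgebra.includeRightCoalgHom_apply (a : A) :
    includeRightCoalgHom R A a = 1 ⊗ₜ a := by
  simp [includeRightCoalgHom, BialgHom.toCoalgHom_apply]

end UnitInclusions

section Normalization

variable {A : Type*} [Ring A] [Bialgebra ℂ A]

lemma isNormalizedCocycle_iff {σ : A ⊗[ℂ] A →ₗ[ℂ] ℂ} :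
    IsNormalizedCocycle A counit σ ↔
      (Bialgebra.includeLeftCoalgHom ℂ A).precompConv (toConv σ) = 1 ∧
        (Bialgebra.includeRightCoalgHom ℂ A).precompConv (toConv σ) = 1 := by
  simp [IsNormalizedCocycle, WithConv.ext_iff, LinearMap.ext_iff, forall_and]

theorem IsNormalizedCocycle.inv {σ σinv : A ⊗[ℂ] A →ₗ[ℂ] ℂ}
    (hσn : IsNormalizedCocycle A counit σ) (hσi : IsConvInverse A comul counit σ σinv) :
    IsNormalizedCocycle A counit σinv := by
  have key (φ : A →ₗc[ℂ] A ⊗[ℂ] A) (h : φ.precompConv (toConv σ) = 1) :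
      φ.precompConv (toConv σinv) = 1 := by
    simpa [h] using congrArg φ.precompConv (isConvInverse_iff.1 hσi).1
  rw [isNormalizedCocycle_iff] at hσn ⊢
  exact ⟨key _ hσn.1, key _ hσn.2⟩

end Normalization

section

open Coalgebra

variable (A : Type*) [Ring A] [HopfAlgebra ℂ A]

/-- if `σ` is a normalized Hopf 2-cocycle on `A` with convolution inverse
`σinv`, then `σinv` is a normalized Hopf 2-cocycle on `A_σ` and `(A_σ)_{σ⁻¹} = A`.
Together with `A_ε = A` (the counit-cocycle is the identity deformation) and the
composition rule `α_τ ∘ α_σ = α_{τ∗σ}`, this makes the arrows `α_σ : A → A_σ` into a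
groupoid with identities `α_ε` and inverses `α_{σ⁻¹}`. -/
theorem inverse_cocycle_deformation
    (σ σinv : (A ⊗[ℂ] A) →ₗ[ℂ] ℂ)
    (hσ : IsHopf2Cocycle A comul (LinearMap.mul' ℂ A) σ)
    (hσn : IsNormalizedCocycle A counit σ)
    (hσi : IsConvInverse A comul counit σ σinv) :
    IsHopf2Cocycle A comul (deformMul A comul (LinearMap.mul' ℂ A) σ σinv) σinv ∧
    IsNormalizedCocycle A counit σinv ∧
    IsConvInverse A comul counit σinv σ ∧
    deformMul A comul (deformMul A comul (LinearMap.mul' ℂ A) σ σinv) σinv σ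
      = LinearMap.mul' ℂ A ∧
    deformMul A comul (LinearMap.mul' ℂ A) (counit₂ A counit) (counit₂ A counit)
      = LinearMap.mul' ℂ A :=
  ⟨IsHopf2Cocycle.deformMul_inv (m := Bialgebra.mulCoalgHom ℂ A) hσ hσi, hσn.inv hσi,
    ⟨hσi.2, hσi.1⟩, deformMul_deformMul_inv _ hσi, deformMul_counit₂ _⟩

end
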